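/- arXiv:2410.15004 — 2 statements merged into one kernel-verified Lean document; each statement's English description precedes it below -/
import Mathlib

section
/- M-equivalence over an ordered alphabet is left and right invariant: if w and w' are M-equivalent, then for any words u and v, the words u·w·v and u·w'·v are M-equivalent. -/
open List

/-- Number of occurrences of `v` as a scattered subsequence of `w`. -/
def scount {α : Type*} [DecidableEq α] (w v : List α) : ℕ := w.sublists.count v

/-- The word `a_i a_{i+1} ⋯ a_j` over the ordered alphabet {0 < 1 < ⋯ < s-1} (as naturals). -/
def seg (i j : ℕ) : List ℕ := List.range' i (j + 1 - i)

/-- M-equivalence over the ordered alphabet {0 < 1 < ⋯ < s-1}: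
agreement on subsequence counts of all factors of the alphabet word. -/
def MEqN (s : ℕ) (w w' : List ℕ) : Prop :=
  ∀ i j : ℕ, i ≤ j → j < s → scount w (seg i j) = scount w' (seg i j)

/-- `w` is a word over the alphabet {0, …, s-1}. -/
def inAlpha (s : ℕ) (w : List ℕ) : Prop := ∀ x ∈ w, x < s

/-!
An occurrence of `v` as a scattered subsequence of `a ++ b` splits `v` into a prefix read in `a`
and a suffix read in `b`, so `|a ++ b|_v = ∑ₙ |a|_{take n v} · |b|_{drop n v}`. Prefixes and
suffixes of a factor `a_i ⋯ a_j` of the alphabet word are again such factors (or empty), hence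
M-equivalence is preserved by appending a word on either side.
-/

theorem scount_cons {α : Type*} [DecidableEq α] (x : α) (w v : List α) :
    scount (x :: w) v = scount w v + count v (map (cons x) w.sublists) := by
  rw [scount, (sublists_cons_perm_append x w).count_eq, count_append, scount]

theorem scount_nil_right {α : Type*} [DecidableEq α] (w : List α) : scount w [] = 1 := by
  induction w with
  | nil => rfl
  | cons x w ih => simp [scount_cons, ih, count_eq_zero]

theorem scount_nil_left {α : Type*} [DecidableEq α] (v : List α) :
    scount [] v = if v = [] then 1 else 0 := by
  by_cases hv : v = [] <;> simp [scount, hv]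

theorem scount_cons_cons {α : Type*} [DecidableEq α] (x y : α) (w v : List α) :
    scount (x :: w) (y :: v) = scount w (y :: v) + if x = y then scount w v else 0 := by
  rw [scount_cons]
  split_ifs with hxy
  · rw [hxy, count_map_of_injective _ _ cons_injective]; rfl
  · simp [count_eq_zero, hxy]

theorem scount_append {α : Type*} [DecidableEq α] (a b v : List α) :
    scount (a ++ b) v =
      ∑ n ∈ Finset.range (v.length + 1), scount a (v.take n) * scount b (v.drop n) := by
  induction a generalizing v with
  | nil =>
    cases v with
    | nil => simp [scount_nil_right]
    | cons y v => simp [Finset.sum_range_succ' _ (v.length + 1), scount_nil_left]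
  | cons x a ih =>
    cases v with
    | nil => simp [scount_nil_right]
    | cons y v =>
      rw [cons_append, scount_cons_cons, ih, ih, length_cons, Finset.sum_range_succ',
        Finset.sum_range_succ' _ (v.length + 1)]
      split_ifs <;> simp [scount_cons_cons, scount_nil_right, *, add_mul, Finset.sum_add_distrib,
        add_right_comm]

theorem List.take_range' (i m n step : ℕ) :
    (range' i m step).take n = range' i (min n m) step := by
  apply ext_getElem <;> simp

theorem MEqN.scount_range'_eq {s : ℕ} {w w' : List ℕ} (h : MEqN s w w') {k m : ℕ}
    (hkm : k + m ≤ s) : scount w (range' k m) = scount w' (range' k m) := by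
  cases m with
  | zero => simp [scount_nil_right]
  | succ m =>
    have hseg : range' k (m + 1) = seg k (k + m) := by rw [seg]; congr 1; omega
    rw [hseg]
    exact h _ _ (by omega) (by omega)

theorem MEqN.append_right {s : ℕ} {w w' : List ℕ} (h : MEqN s w w') (v : List ℕ) :
    MEqN s (w ++ v) (w' ++ v) := by
  intro i j _ hjs
  simp only [scount_append]
  refine Finset.sum_congr rfl fun n _ => ?_
  rw [seg, take_range', h.scount_range'_eq (by omega)]

theorem MEqN.append_left {s : ℕ} {w w' : List ℕ} (h : MEqN s w w') (u : List ℕ) :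
    MEqN s (u ++ w) (u ++ w') := by
  intro i j _ hjs
  simp only [scount_append]
  refine Finset.sum_congr rfl fun n _ => ?_
  rcases le_or_gt n (j + 1 - i) with hn | hn
  · rw [seg, drop_range', h.scount_range'_eq (by omega)]
  · rw [drop_of_length_le (by rw [seg, length_range']; omega), scount_nil_right, scount_nil_right]

theorem stmt_3_general (s : ℕ) (w w' u v : List ℕ)
    (h : MEqN s w w') :
    MEqN s (u ++ w ++ v) (u ++ w' ++ v) :=
  (h.append_left u).append_right v

theorem stmt_3 (s : ℕ) (w w' u v : List ℕ)
    (hw : inAlpha s w) (hw' : inAlpha s w') (hu : inAlpha s u) (hv : inAlpha s v)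
    (h : MEqN s w w') :
    MEqN s (u ++ w ++ v) (u ++ w' ++ v) :=
  stmt_3_general s w w' u v h
end

section
/- Let Σ = {a_1 < a_2 < ... < a_s} be an ordered alphabet, and suppose w' = w_1 · a_i · w_2 · a_j · w_3 and w'' = w_1 · a_j · w_2 · a_i · w_3 with i < j are M-equivalent and distinct. Then j ≥ i+2 and |w_2|_{a_{i+1}} = 0; consequently, a_i · w_2 · a_j contains a factor a_{i'} a_{j'} with i' ≤ i and j' ≥ i+2. -/
open List

/-! Swapping the letters `a_i` and `a_j` changes only the occurrences of `a_i a_{i+1}` that use one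
of the two swapped positions. In `w'` there are none of those (as `j > i`), while in `w''` the
displaced `a_i` precedes every `a_{i+1}` of `w_2`, and also the displaced `a_j` if `j = i + 1`.
Equality of the counts therefore forces `j ≠ i + 1` and `|w_2|_{a_{i+1}} = 0`. Then every letter
of `a_i w_2 a_j` is either `≤ a_i` or `≥ a_{i+2}`, so somewhere a low letter is directly followed by
a high one. -/

section Scount

variable {α : Type*} [DecidableEq α]

lemma count_sublists_cons (x : α) (w v : List α) :
    (x :: w).sublists.count v = w.sublists.count v + (w.sublists.map (x :: ·)).count v := by
  rw [← count_append]
  exact (sublists_cons_perm_append x w).count_eq v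

lemma count_map_cons_cons (x a : α) (t : List α) (L : List (List α)) :
    (L.map (x :: ·)).count (a :: t) = if x = a then L.count t else 0 := by
  split_ifs with h
  · subst h
    exact count_map_of_injective L (x :: ·) (fun _ _ h => by simpa using h) t
  · exact count_eq_zero.2 (by simp [h])

lemma count_nil_sublists (w : List α) : w.sublists.count [] = 1 := by
  induction w with
  | nil => rfl
  | cons x w ih => rw [count_sublists_cons, ih, count_eq_zero.2 (by simp)]

lemma count_singleton_sublists (w : List α) (a : α) : w.sublists.count [a] = w.count a := by
  induction w with
  | nil => rfl
  | cons x w ih =>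
    rw [count_sublists_cons, ih, count_map_cons_cons, count_nil_sublists, count_cons]
    simp

lemma scount_cons_pair (x : α) (w : List α) (a b : α) :
    scount (x :: w) [a, b] = scount w [a, b] + if x = a then w.count b else 0 := by
  rw [scount, scount, count_sublists_cons, count_map_cons_cons, count_singleton_sublists]

lemma scount_append_pair (u v : List α) (a b : α) :
    scount (u ++ v) [a, b] = scount u [a, b] + scount v [a, b] + u.count a * v.count b := by
  induction u with
  | nil => simp [scount]
  | cons x u ih =>
    rw [cons_append, scount_cons_pair, ih, scount_cons_pair, count_cons]
    split_ifs <;> simp_all; ring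

lemma scount_pair_swap (u p v q t : List α) (a b : α) :
    scount (u ++ p ++ v ++ q ++ t) [a, b]
        + (q.count a * v.count b + v.count a * p.count b + q.count a * p.count b) =
      scount (u ++ q ++ v ++ p ++ t) [a, b]
        + (p.count a * v.count b + v.count a * q.count b + p.count a * q.count b) := by
  simp only [scount_append_pair, count_append]
  ring

end Scount

lemma seg_succ (i : ℕ) : seg i (i + 1) = [i, i + 1] := by
  simp [seg, show i + 1 + 1 - i = 2 by omega, range']

lemma ne_succ_and_count_succ_eq_zero_of_scount_swap {i j : ℕ} (hij : i < j) (u v t : List ℕ)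
    (h : scount (u ++ [i] ++ v ++ [j] ++ t) [i, i + 1] =
      scount (u ++ [j] ++ v ++ [i] ++ t) [i, i + 1]) :
    j ≠ i + 1 ∧ v.count (i + 1) = 0 := by
  have key := scount_pair_swap u [i] v [j] t i (i + 1)
  rw [h] at key
  by_cases hj : j = i + 1
  · simp [hj] at key
  · simpa [hj, hij.ne'] using key

lemma exists_infix_pair_of_head_of_not_last {α : Type*} (P : α → Prop) (l : List α) :
    ∀ c d, P c → ¬ P d → ∃ x y, P x ∧ ¬ P y ∧ [x, y] <:+: c :: l ++ [d] := by
  induction l with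
  | nil => exact fun c d hc hd => ⟨c, d, hc, hd, infix_rfl⟩
  | cons x l ih =>
    intro c d hc hd
    by_cases hx : P x
    · obtain ⟨y, z, hy, hz, hyz⟩ := ih x d hx hd
      exact ⟨y, z, hy, hz, hyz.trans (suffix_cons c _).isInfix⟩
    · exact ⟨c, x, hc, hx, (prefix_append [c, x] (l ++ [d])).isInfix⟩

theorem stmt_14_general (s : ℕ) (i j : ℕ) (hij : i < j) (hjs : j < s)
    (w1 w2 w3 : List ℕ)
    (h2 : inAlpha s w2)
    (hM : MEqN s (w1 ++ [i] ++ w2 ++ [j] ++ w3) (w1 ++ [j] ++ w2 ++ [i] ++ w3)) :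
    i + 2 ≤ j ∧ w2.count (i + 1) = 0 ∧
      ∃ i' j' : ℕ, i' ≤ i ∧ i + 2 ≤ j' ∧ j' < s ∧
        [i', j'] <:+: ([i] ++ w2 ++ [j]) := by
  have heq := hM i (i + 1) (Nat.le_succ i) (by omega)
  rw [seg_succ] at heq
  obtain ⟨hj, hcount⟩ := ne_succ_and_count_succ_eq_zero_of_scount_swap hij w1 w2 w3 heq
  refine ⟨by omega, hcount, ?_⟩
  obtain ⟨x, y, hx, hy, hxy⟩ :=
    exists_infix_pair_of_head_of_not_last (· ≤ i) w2 i j le_rfl (by omega)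
  have hy_mem : y = i ∨ y ∈ w2 ∨ y = j := by simpa using hxy.subset (by simp)
  rcases hy_mem with rfl | hy_w2 | rfl
  · exact absurd le_rfl hy
  · have hy_ne : y ≠ i + 1 := by
      rintro rfl
      exact count_eq_zero.1 hcount hy_w2
    exact ⟨x, y, hx, by omega, h2 y hy_w2, hxy⟩
  · exact ⟨x, y, hx, by omega, hjs, hxy⟩

theorem stmt_14 (s : ℕ) (i j : ℕ) (hij : i < j) (hjs : j < s)
    (w1 w2 w3 : List ℕ)
    (h1 : inAlpha s w1) (h2 : inAlpha s w2) (h3 : inAlpha s w3)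
    (hM : MEqN s (w1 ++ [i] ++ w2 ++ [j] ++ w3) (w1 ++ [j] ++ w2 ++ [i] ++ w3))
    (hne : (w1 ++ [i] ++ w2 ++ [j] ++ w3) ≠ (w1 ++ [j] ++ w2 ++ [i] ++ w3)) :
    i + 2 ≤ j ∧ w2.count (i + 1) = 0 ∧
      ∃ i' j' : ℕ, i' ≤ i ∧ i + 2 ≤ j' ∧ j' < s ∧
        [i', j'] <:+: ([i] ++ w2 ++ [j]) :=
  stmt_14_general s i j hij hjs w1 w2 w3 h2 hM
end
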